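/- (Vertical curvature formula for the Sasaki metric.) Let U ⊆ ℝⁿ be open with a metric g and an affine connection D given by Christoffel symbols Γ, and let R̃ be the Riemannian curvature of the Sasaki metric g̃^D on TU = U × ℝⁿ. Then for all (x,ξ) ∈ TU and all v, w, y, z ∈ ℝⁿ, with lifts at (x,ξ) and {e_i} an orthonormal basis of ℝⁿ with respect to g(x): g̃^D(R̃(v^V, y^V)(w^V), z^V) = −¼ Σ_i { (D_{e_i} g)(x)(v,z) (D_{e_i} g)(x)(y,w) − (D_{e_i} g)(x)(y,z) (D_{e_i} g)(x)(v,w) }. -/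

import Mathlib

/-!
STATEMENT 10: vertical curvature formula for the Sasaki metric:
g̃(R̃(v^V, y^V)(w^V), z^V)
  = −¼ Σ_i { (D_{e_i}g)(v,z)(D_{e_i}g)(y,w) − (D_{e_i}g)(y,z)(D_{e_i}g)(v,w) }.
-/

open scoped BigOperators

/-- Covariant derivative of the metric `g` with respect to the connection `Γ`. -/
noncomputable def covg {n : ℕ}
    (g : (Fin n → ℝ) → (Fin n → ℝ) →L[ℝ] (Fin n → ℝ) →L[ℝ] ℝ)
    (Γ : (Fin n → ℝ) → (Fin n → ℝ) →L[ℝ] (Fin n → ℝ) →L[ℝ] (Fin n → ℝ))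
    (x v y z : Fin n → ℝ) : ℝ :=
  fderiv ℝ g x v y z - g x (Γ x v y) z - g x y (Γ x v z)

/-- Horizontal lift of `v` at `(x,ξ)`. -/
noncomputable def hor {n : ℕ}
    (Γ : (Fin n → ℝ) → (Fin n → ℝ) →L[ℝ] (Fin n → ℝ) →L[ℝ] (Fin n → ℝ))
    (x ξ v : Fin n → ℝ) : (Fin n → ℝ) × (Fin n → ℝ) :=
  (v, -(Γ x v ξ))

/-- Vertical lift of `v`. -/
def ver {n : ℕ} (v : Fin n → ℝ) : (Fin n → ℝ) × (Fin n → ℝ) :=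
  (0, v)

/-- The Sasaki metric `g̃^D` at `(x,ξ)`. -/
noncomputable def sasaki {n : ℕ}
    (g : (Fin n → ℝ) → (Fin n → ℝ) →L[ℝ] (Fin n → ℝ) →L[ℝ] ℝ)
    (Γ : (Fin n → ℝ) → (Fin n → ℝ) →L[ℝ] (Fin n → ℝ) →L[ℝ] (Fin n → ℝ))
    (x ξ : Fin n → ℝ) (A B : (Fin n → ℝ) × (Fin n → ℝ)) : ℝ :=
  g x A.1 B.1 + g x (A.2 + Γ x A.1 ξ) (B.2 + Γ x B.1 ξ)

/-- The Riemannian curvature of the connection on TU with Christoffel symbols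
`Γ̃`: `R̃(a)(A,B)(C) = (fderiv Γ̃ a A)(B)(C) − (fderiv Γ̃ a B)(A)(C)
  + Γ̃(a)(A)(Γ̃(a)(B)(C)) − Γ̃(a)(B)(Γ̃(a)(A)(C))`. -/
noncomputable def curvT {n : ℕ}
    (Γt : (Fin n → ℝ) × (Fin n → ℝ) →
      ((Fin n → ℝ) × (Fin n → ℝ)) →L[ℝ] ((Fin n → ℝ) × (Fin n → ℝ)) →L[ℝ]
        ((Fin n → ℝ) × (Fin n → ℝ)))
    (a : (Fin n → ℝ) × (Fin n → ℝ)) (A B C : (Fin n → ℝ) × (Fin n → ℝ)) :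
    (Fin n → ℝ) × (Fin n → ℝ) :=
  fderiv ℝ Γt a A B C - fderiv ℝ Γt a B A C + Γt a A (Γt a B C) - Γt a B (Γt a A C)

lemma fderiv_fst_vert {n : ℕ} {F : Type*} [NormedAddCommGroup F] [NormedSpace ℝ F]
    (h : (Fin n → ℝ) → F) (p : (Fin n → ℝ) × (Fin n → ℝ)) (t : Fin n → ℝ) :
    fderiv ℝ (fun q : (Fin n → ℝ) × (Fin n → ℝ) => h q.1) p ((0 : Fin n → ℝ), t) = 0 := by
  by_cases hd : DifferentiableAt ℝ h p.1
  · have h1 : HasFDerivAt (fun q : (Fin n → ℝ) × (Fin n → ℝ) => h q.1)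
        ((fderiv ℝ h p.1).comp (ContinuousLinearMap.fst ℝ _ _)) p :=
      (hd.hasFDerivAt).comp p hasFDerivAt_fst
    rw [h1.fderiv]
    simp
  · rw [fderiv_zero_of_not_differentiableAt]
    · simp
    · intro hc
      apply hd
      have he : h = (fun q : (Fin n → ℝ) × (Fin n → ℝ) => h q.1) ∘ (fun x => (x, p.2)) := rfl
      rw [he]
      exact DifferentiableAt.comp p.1 hc ((differentiableAt_id).prodMk (differentiableAt_const _))

open ContinuousLinearMap in
lemma sasaki_fderiv_master {n : ℕ}
    (g : (Fin n → ℝ) → (Fin n → ℝ) →L[ℝ] (Fin n → ℝ) →L[ℝ] ℝ)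
    (Γ : (Fin n → ℝ) → (Fin n → ℝ) →L[ℝ] (Fin n → ℝ) →L[ℝ] (Fin n → ℝ))
    {x ξ : Fin n → ℝ}
    (hgd : DifferentiableAt ℝ g x) (hΓd : DifferentiableAt ℝ Γ x)
    {V : (Fin n → ℝ) × (Fin n → ℝ) → (Fin n → ℝ) × (Fin n → ℝ)}
    {V' : ((Fin n → ℝ) × (Fin n → ℝ)) →L[ℝ] (Fin n → ℝ) × (Fin n → ℝ)}
    (hV : HasFDerivAt V V' (x, ξ)) (Z : (Fin n → ℝ) × (Fin n → ℝ))
    (A : (Fin n → ℝ) × (Fin n → ℝ)) :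
    fderiv ℝ (fun p => sasaki g Γ p.1 p.2 (V p) Z) (x, ξ) A
      = fderiv ℝ g x A.1 (V (x,ξ)).1 Z.1 + g x (V' A).1 Z.1
        + fderiv ℝ g x A.1 ((V (x,ξ)).2 + Γ x (V (x,ξ)).1 ξ) (Z.2 + Γ x Z.1 ξ)
        + g x ((V' A).2 + (fderiv ℝ Γ x A.1 (V (x,ξ)).1 ξ + Γ x (V' A).1 ξ
            + Γ x (V (x,ξ)).1 A.2)) (Z.2 + Γ x Z.1 ξ)
        + g x ((V (x,ξ)).2 + Γ x (V (x,ξ)).1 ξ)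
            (fderiv ℝ Γ x A.1 Z.1 ξ + Γ x Z.1 A.2) := by
  have hg1 : HasFDerivAt (fun p : (Fin n → ℝ) × (Fin n → ℝ) => g p.1)
      ((fderiv ℝ g x).comp (fst ℝ _ _)) (x, ξ) :=
    HasFDerivAt.comp (x, ξ) (g := g) (f := Prod.fst) (hgd.hasFDerivAt) (hasFDerivAt_fst (p := (x, ξ)) : HasFDerivAt Prod.fst (fst ℝ (Fin n → ℝ) (Fin n → ℝ)) (x, ξ))
  have hΓ1 : HasFDerivAt (fun p : (Fin n → ℝ) × (Fin n → ℝ) => Γ p.1)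
      ((fderiv ℝ Γ x).comp (fst ℝ _ _)) (x, ξ) :=
    HasFDerivAt.comp (x, ξ) (g := Γ) (f := Prod.fst) (hΓd.hasFDerivAt) (hasFDerivAt_fst (p := (x, ξ)) : HasFDerivAt Prod.fst (fst ℝ (Fin n → ℝ) (Fin n → ℝ)) (x, ξ))
  have hV1 : HasFDerivAt (fun p => (V p).1) ((fst ℝ _ _).comp V') (x, ξ) :=
    hasFDerivAt_fst.comp (x, ξ) hV
  have hV2 : HasFDerivAt (fun p => (V p).2) ((snd ℝ _ _).comp V') (x, ξ) :=
    hasFDerivAt_snd.comp (x, ξ) hV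
  have h1 := (hg1.clm_apply hV1).clm_apply (hasFDerivAt_const Z.1 (x,ξ))
  have hinner := hV2.add ((hΓ1.clm_apply hV1).clm_apply hasFDerivAt_snd)
  have hinnZ := (hasFDerivAt_const Z.2 (x,ξ)).add
    ((hΓ1.clm_apply (hasFDerivAt_const Z.1 (x,ξ))).clm_apply hasFDerivAt_snd)
  have htot := h1.add ((hg1.clm_apply hinner).clm_apply hinnZ)
  have hfd : HasFDerivAt (fun p => sasaki g Γ p.1 p.2 (V p) Z) _ (x,ξ) := htot
  rw [hfd.fderiv]
  simp only [ContinuousLinearMap.add_apply, ContinuousLinearMap.comp_apply,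
    ContinuousLinearMap.flip_apply, ContinuousLinearMap.coe_fst',
    ContinuousLinearMap.coe_snd', ContinuousLinearMap.zero_apply, map_zero,
    map_add, zero_add, add_zero, Pi.add_apply]
  ring

lemma sasaki_fderiv_const {n : ℕ}
    (g : (Fin n → ℝ) → (Fin n → ℝ) →L[ℝ] (Fin n → ℝ) →L[ℝ] ℝ)
    (Γ : (Fin n → ℝ) → (Fin n → ℝ) →L[ℝ] (Fin n → ℝ) →L[ℝ] (Fin n → ℝ))
    {x ξ : Fin n → ℝ}
    (hgd : DifferentiableAt ℝ g x) (hΓd : DifferentiableAt ℝ Γ x)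
    (B Z A : (Fin n → ℝ) × (Fin n → ℝ)) :
    fderiv ℝ (fun p => sasaki g Γ p.1 p.2 B Z) (x, ξ) A
      = fderiv ℝ g x A.1 B.1 Z.1
        + fderiv ℝ g x A.1 (B.2 + Γ x B.1 ξ) (Z.2 + Γ x Z.1 ξ)
        + g x (fderiv ℝ Γ x A.1 B.1 ξ + Γ x B.1 A.2) (Z.2 + Γ x Z.1 ξ)
        + g x (B.2 + Γ x B.1 ξ) (fderiv ℝ Γ x A.1 Z.1 ξ + Γ x Z.1 A.2) := by
  have hm := sasaki_fderiv_master g Γ hgd hΓd (hasFDerivAt_const B (x,ξ)) Z A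
  simp only [ContinuousLinearMap.zero_apply, Prod.fst_zero, Prod.snd_zero, map_zero,
    zero_add, add_zero] at hm
  linarith [hm]

lemma sasaki_first {n : ℕ}
    (g : (Fin n → ℝ) → (Fin n → ℝ) →L[ℝ] (Fin n → ℝ) →L[ℝ] ℝ)
    (Γ : (Fin n → ℝ) → (Fin n → ℝ) →L[ℝ] (Fin n → ℝ) →L[ℝ] (Fin n → ℝ))
    (x ξ : Fin n → ℝ) (A B C D Z : (Fin n → ℝ) × (Fin n → ℝ)) :
    sasaki g Γ x ξ (A - B + C - D) Z
      = sasaki g Γ x ξ A Z - sasaki g Γ x ξ B Z + sasaki g Γ x ξ C Z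
        - sasaki g Γ x ξ D Z := by
  simp only [sasaki, Prod.fst_sub, Prod.fst_add, Prod.snd_sub, Prod.snd_add,
    map_add, map_sub, ContinuousLinearMap.add_apply, ContinuousLinearMap.sub_apply]
  ring

set_option maxHeartbeats 2000000 in
theorem statement10 (n : ℕ) (hn : 1 ≤ n) (U : Set (Fin n → ℝ)) (hU : IsOpen U)
    (g : (Fin n → ℝ) → (Fin n → ℝ) →L[ℝ] (Fin n → ℝ) →L[ℝ] ℝ)
    (hg : ContDiffOn ℝ (⊤ : ℕ∞) g U)
    (hgsymm : ∀ x ∈ U, ∀ v w : Fin n → ℝ, g x v w = g x w v)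
    (hgpos : ∀ x ∈ U, ∀ v : Fin n → ℝ, v ≠ 0 → 0 < g x v v)
    (Γ : (Fin n → ℝ) → (Fin n → ℝ) →L[ℝ] (Fin n → ℝ) →L[ℝ] (Fin n → ℝ))
    (hΓ : ContDiffOn ℝ (⊤ : ℕ∞) Γ U)
    -- the Levi-Civita connection of the Sasaki metric, with Christoffel symbols Γt
    (Γt : (Fin n → ℝ) × (Fin n → ℝ) →
      ((Fin n → ℝ) × (Fin n → ℝ)) →L[ℝ] ((Fin n → ℝ) × (Fin n → ℝ)) →L[ℝ]
        ((Fin n → ℝ) × (Fin n → ℝ)))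
    (hΓt : ContDiffOn ℝ (⊤ : ℕ∞) Γt {p | p.1 ∈ U})
    (hΓtsymm : ∀ a : (Fin n → ℝ) × (Fin n → ℝ), a.1 ∈ U →
      ∀ A B : (Fin n → ℝ) × (Fin n → ℝ), Γt a A B = Γt a B A)
    (hΓtcompat : ∀ a : (Fin n → ℝ) × (Fin n → ℝ), a.1 ∈ U →
      ∀ A B C : (Fin n → ℝ) × (Fin n → ℝ),
        fderiv ℝ (fun p => sasaki g Γ p.1 p.2 B C) a A
          = sasaki g Γ a.1 a.2 (Γt a A B) C + sasaki g Γ a.1 a.2 B (Γt a A C)) :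
    ∀ x ∈ U, ∀ ξ : Fin n → ℝ,
      ∀ e : Fin n → (Fin n → ℝ),
        (∀ i j, g x (e i) (e j) = if i = j then 1 else 0) →
        ∀ v w y z : Fin n → ℝ,
          sasaki g Γ x ξ (curvT Γt (x, ξ) (ver v) (ver y) (ver w)) (ver z)
            = -(1/4) * ∑ i,
                (covg g Γ x (e i) v z * covg g Γ x (e i) y w
                  - covg g Γ x (e i) y z * covg g Γ x (e i) v w) := by
  intro x hx ξ e he v w y z
  have hxmem : U ∈ nhds x := hU.mem_nhds hx
  have hgd : DifferentiableAt ℝ g x := (hg.contDiffAt hxmem).differentiableAt (by simp)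
  have hΓd : DifferentiableAt ℝ Γ x := (hΓ.contDiffAt hxmem).differentiableAt (by simp)
  have hamem : {p : (Fin n → ℝ) × (Fin n → ℝ) | p.1 ∈ U} ∈ nhds (x, ξ) :=
    (hU.preimage continuous_fst).mem_nhds hx
  have hΓtd : DifferentiableAt ℝ Γt (x, ξ) :=
    (hΓt.contDiffAt hamem).differentiableAt (by simp)
  -- Koszul formula
  have koszul : ∀ a : (Fin n → ℝ) × (Fin n → ℝ), a.1 ∈ U →
      ∀ A B C : (Fin n → ℝ) × (Fin n → ℝ),
      2 * sasaki g Γ a.1 a.2 (Γt a A B) C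
        = fderiv ℝ (fun p => sasaki g Γ p.1 p.2 B C) a A
          + fderiv ℝ (fun p => sasaki g Γ p.1 p.2 A C) a B
          - fderiv ℝ (fun p => sasaki g Γ p.1 p.2 A B) a C := by
    intro a ha A B C
    have hs : ∀ P Q : (Fin n → ℝ) × (Fin n → ℝ),
        sasaki g Γ a.1 a.2 P Q = sasaki g Γ a.1 a.2 Q P := by
      intro P Q
      simp only [sasaki]
      rw [hgsymm _ ha P.1 Q.1, hgsymm _ ha (P.2 + Γ a.1 P.1 a.2) (Q.2 + Γ a.1 Q.1 a.2)]
    rw [hΓtcompat a ha A B C, hΓtcompat a ha B A C, hΓtcompat a ha C A B,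
        hΓtsymm a ha B A, hΓtsymm a ha C A, hΓtsymm a ha C B,
        hs B (Γt a A C), hs A (Γt a B C)]
    ring
  -- vertical-vertical derivatives vanish identically
  have hd0 : ∀ (b c t : Fin n → ℝ) (p : (Fin n → ℝ) × (Fin n → ℝ)),
      fderiv ℝ (fun q : (Fin n → ℝ) × (Fin n → ℝ) =>
        sasaki g Γ q.1 q.2 (ver b) (ver c)) p (ver t) = 0 := by
    intro b c t p
    have hfun : (fun q : (Fin n → ℝ) × (Fin n → ℝ) => sasaki g Γ q.1 q.2 (ver b) (ver c))
        = fun q : (Fin n → ℝ) × (Fin n → ℝ) => g q.1 b c := by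
      funext q
      simp [sasaki, ver]
    rw [hfun]
    exact fderiv_fst_vert (fun x1 => g x1 b c) p t
  -- Step B: horizontal pairing of Γt on vertical lifts
  have hcoef : ∀ α β u : Fin n → ℝ,
      2 * g x (Γt (x, ξ) (ver α) (ver β)).1 u = -covg g Γ x u α β := by
    intro α β u
    have hk := koszul (x, ξ) hx (ver α) (ver β) (hor Γ x ξ u)
    rw [sasaki_fderiv_const g Γ hgd hΓd (ver β) (hor Γ x ξ u) (ver α),
        sasaki_fderiv_const g Γ hgd hΓd (ver α) (hor Γ x ξ u) (ver β),
        sasaki_fderiv_const g Γ hgd hΓd (ver α) (ver β) (hor Γ x ξ u)] at hk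
    simp only [ver, hor, sasaki, ContinuousLinearMap.map_zero, ContinuousLinearMap.map_neg,
      ContinuousLinearMap.zero_apply, ContinuousLinearMap.neg_apply,
      zero_add, add_zero, neg_add_cancel] at hk
    rw [hgsymm x hx β (Γ x u α)] at hk
    simp only [ver, covg]
    linarith [hk]
  -- Step C: vertical pairing of the derivative of Γt
  have hW : ∀ α γ δ zz : Fin n → ℝ,
      sasaki g Γ x ξ (fderiv ℝ Γt (x, ξ) (ver α) (ver γ) (ver δ)) (ver zz)
        = -(g x (Γ x (Γt (x, ξ) (ver γ) (ver δ)).1 α) zz) := by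
    intro α γ δ zz
    have hVfd : HasFDerivAt (fun p : (Fin n → ℝ) × (Fin n → ℝ) => Γt p (ver γ) (ver δ))
        _ (x, ξ) :=
      (hΓtd.hasFDerivAt.clm_apply (hasFDerivAt_const (ver γ) (x, ξ))).clm_apply
        (hasFDerivAt_const (ver δ) (x, ξ))
    have hφ0 : ∀ p : (Fin n → ℝ) × (Fin n → ℝ), p.1 ∈ U →
        sasaki g Γ p.1 p.2 (Γt p (ver γ) (ver δ)) (ver zz) = 0 := by
      intro p hp
      have hk := koszul p hp (ver γ) (ver δ) (ver zz)
      rw [hd0 δ zz γ p, hd0 γ zz δ p, hd0 γ δ zz p] at hk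
      linarith [hk]
    have hev : (fun p : (Fin n → ℝ) × (Fin n → ℝ) =>
        sasaki g Γ p.1 p.2 (Γt p (ver γ) (ver δ)) (ver zz)) =ᶠ[nhds (x, ξ)] fun _ => 0 :=
      Filter.eventuallyEq_of_mem hamem hφ0
    have hφfd : HasFDerivAt (𝕜 := ℝ) (fun p : (Fin n → ℝ) × (Fin n → ℝ) =>
        sasaki g Γ p.1 p.2 (Γt p (ver γ) (ver δ)) (ver zz)) 0 (x, ξ) :=
      (hasFDerivAt_const (0:ℝ) (x, ξ)).congr_of_eventuallyEq hev
    have h0 : fderiv ℝ (fun p : (Fin n → ℝ) × (Fin n → ℝ) =>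
        sasaki g Γ p.1 p.2 (Γt p (ver γ) (ver δ)) (ver zz)) (x, ξ) (ver α) = 0 := by
      rw [hφfd.fderiv]
      simp only [ContinuousLinearMap.zero_apply]
    have hm := sasaki_fderiv_master g Γ hgd hΓd hVfd (ver zz) (ver α)
    rw [h0] at hm
    simp only [ver, sasaki, ContinuousLinearMap.map_zero, ContinuousLinearMap.zero_apply,
      ContinuousLinearMap.add_apply, ContinuousLinearMap.comp_apply,
      ContinuousLinearMap.flip_apply, ContinuousLinearMap.comp_zero,
      ContinuousLinearMap.zero_comp, ContinuousLinearMap.map_add,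
      zero_add, add_zero] at hm ⊢
    linarith [hm]
  -- Step D: quadratic Christoffel term
  have hG : ∀ (α : Fin n → ℝ) (Q : (Fin n → ℝ) × (Fin n → ℝ)) (zz : Fin n → ℝ),
      2 * sasaki g Γ x ξ (Γt (x, ξ) (ver α) Q) (ver zz)
        = g x (Γ x Q.1 α) zz + fderiv ℝ g x Q.1 α zz - g x α (Γ x Q.1 zz) := by
    intro α Q zz
    have hk := koszul (x, ξ) hx (ver α) Q (ver zz)
    rw [sasaki_fderiv_const g Γ hgd hΓd Q (ver zz) (ver α),
        sasaki_fderiv_const g Γ hgd hΓd (ver α) (ver zz) Q,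
        sasaki_fderiv_const g Γ hgd hΓd (ver α) Q (ver zz)] at hk
    simp only [ver, sasaki, ContinuousLinearMap.map_zero, ContinuousLinearMap.zero_apply,
      zero_add, add_zero] at hk ⊢
    linarith [hk]
  -- orthonormal expansion
  have hNe : Nonempty (Fin n) := ⟨⟨0, hn⟩⟩
  have hli : LinearIndependent ℝ e := by
    rw [Fintype.linearIndependent_iff]
    intro c hc j
    have h2 := congrArg (fun u => g x u (e j)) hc
    simpa [map_sum, map_smul, ContinuousLinearMap.sum_apply, ContinuousLinearMap.smul_apply,
      smul_eq_mul, he, mul_ite, mul_one, mul_zero, Finset.sum_ite_eq', Finset.mem_univ]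
      using h2
  obtain ⟨b, hb⟩ : ∃ b : Module.Basis (Fin n) ℝ (Fin n → ℝ), ⇑b = e :=
    ⟨basisOfLinearIndependentOfCardEqFinrank hli
        (by simp [Module.finrank_fin_fun, Fintype.card_fin]),
      coe_basisOfLinearIndependentOfCardEqFinrank hli _⟩
  have hq : ∀ q : Fin n → ℝ, ∑ i, b.repr q i • e i = q := by
    intro q
    rw [← hb]
    exact b.sum_repr q
  have hrep : ∀ (q : Fin n → ℝ) (j : Fin n), g x q (e j) = b.repr q j := by
    intro q j
    conv_lhs => rw [← hq q]
    simp [map_sum, map_smul, ContinuousLinearMap.sum_apply, ContinuousLinearMap.smul_apply,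
      smul_eq_mul, he, mul_ite, mul_one, mul_zero, Finset.sum_ite_eq', Finset.mem_univ]
  have hexp : ∀ q : Fin n → ℝ, q = ∑ i, g x q (e i) • e i := by
    intro q
    conv_lhs => rw [← hq q]
    exact Finset.sum_congr rfl fun i _ => by rw [hrep q i]
  have hcovlin : ∀ (c : Fin n → ℝ) (vv zz : Fin n → ℝ),
      covg g Γ x (∑ i, c i • e i) vv zz = ∑ i, c i * covg g Γ x (e i) vv zz := by
    intro c vv zz
    simp only [covg, map_sum, map_smul, ContinuousLinearMap.sum_apply,
      ContinuousLinearMap.smul_apply, smul_eq_mul]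
    rw [← Finset.sum_sub_distrib, ← Finset.sum_sub_distrib]
    exact Finset.sum_congr rfl fun i _ => by ring
  -- assemble
  have hcurv : sasaki g Γ x ξ (curvT Γt (x, ξ) (ver v) (ver y) (ver w)) (ver z)
      = sasaki g Γ x ξ (fderiv ℝ Γt (x, ξ) (ver v) (ver y) (ver w)) (ver z)
        - sasaki g Γ x ξ (fderiv ℝ Γt (x, ξ) (ver y) (ver v) (ver w)) (ver z)
        + sasaki g Γ x ξ (Γt (x, ξ) (ver v) (Γt (x, ξ) (ver y) (ver w))) (ver z)
        - sasaki g Γ x ξ (Γt (x, ξ) (ver y) (Γt (x, ξ) (ver v) (ver w))) (ver z) := by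
    simp only [curvT]
    exact sasaki_first g Γ x ξ _ _ _ _ _
  have e1 := hW v y w z
  have e2 := hW y v w z
  have e3 := hG v (Γt (x, ξ) (ver y) (ver w)) z
  have e4 := hG y (Γt (x, ξ) (ver v) (ver w)) z
  have hc1 : covg g Γ x (Γt (x, ξ) (ver y) (ver w)).1 v z
      = fderiv ℝ g x (Γt (x, ξ) (ver y) (ver w)).1 v z
        - g x (Γ x (Γt (x, ξ) (ver y) (ver w)).1 v) z
        - g x v (Γ x (Γt (x, ξ) (ver y) (ver w)).1 z) := rfl
  have hc2 : covg g Γ x (Γt (x, ξ) (ver v) (ver w)).1 y z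
      = fderiv ℝ g x (Γt (x, ξ) (ver v) (ver w)).1 y z
        - g x (Γ x (Γt (x, ξ) (ver v) (ver w)).1 y) z
        - g x y (Γ x (Γt (x, ξ) (ver v) (ver w)).1 z) := rfl
  have key : sasaki g Γ x ξ (curvT Γt (x, ξ) (ver v) (ver y) (ver w)) (ver z)
      = (1/2) * covg g Γ x (Γt (x, ξ) (ver y) (ver w)).1 v z
        - (1/2) * covg g Γ x (Γt (x, ξ) (ver v) (ver w)).1 y z := by
    rw [hcurv, e1, e2, hc1, hc2]
    linarith [e3, e4]
  rw [key]
  conv_lhs => rw [hexp (Γt (x, ξ) (ver y) (ver w)).1, hexp (Γt (x, ξ) (ver v) (ver w)).1]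
  rw [hcovlin, hcovlin]
  have hcy : ∀ i, g x (Γt (x, ξ) (ver y) (ver w)).1 (e i)
      = -(1/2) * covg g Γ x (e i) y w := by
    intro i
    have := hcoef y w (e i)
    linarith
  have hcv : ∀ i, g x (Γt (x, ξ) (ver v) (ver w)).1 (e i)
      = -(1/2) * covg g Γ x (e i) v w := by
    intro i
    have := hcoef v w (e i)
    linarith
  simp only [hcy, hcv]
  rw [Finset.mul_sum, Finset.mul_sum, Finset.mul_sum, ← Finset.sum_sub_distrib]
  exact Finset.sum_congr rfl fun i _ => by ring
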